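/- Let G = ℤ^d ⊕ F be a finitely generated abelian group, where d ≥ 0 and F is a finite abelian group. Then the subspace topology induced by the Chabauty space C(G) on the set IC(G) of infinite cyclic subgroups of G is discrete. -/

import Mathlib

/-!
Over a discrete group `G`, the sets `{H | g ∈ H}` are clopen in the Chabauty topology, so `C(G)` is
Hausdorff and `{H | g ∈ H}` is an open neighbourhood of `⟨g⟩`. If `⟨g⟩ ≤ ℤ^d ⊕ F` is infinite,
then `g` has a nonzero coordinate `g_j` in `ℤ^d`, and any `h` with `n • h = g` is determined by
`h.2 ∈ F` and the divisor `n` of `g_j`. Hence this neighbourhood contains only finitely many cyclic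
subgroups, and a point with a neighbourhood meeting a subspace in a finite set is isolated in it.
-/

/-- The Chabauty space of an additive topological group `G`:
the set of closed additive subgroups of `G`. -/
def ChabautySpace (G : Type*) [AddGroup G] [TopologicalSpace G] : Type _ :=
  {H : AddSubgroup G // IsClosed (H : Set G)}

/-- The Chabauty topology on the space of closed subgroups, generated by the sets
`O_K = {H | H ∩ K = ∅}` for `K` compact and `O'_U = {H | H ∩ U ≠ ∅}` for `U` open. -/
instance ChabautySpace.instTopologicalSpace (G : Type*) [AddGroup G] [TopologicalSpace G] :
    TopologicalSpace (ChabautySpace G) :=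
  TopologicalSpace.generateFrom
    ({S | ∃ K : Set G, IsCompact K ∧ S = {H : ChabautySpace G | (H.1 : Set G) ∩ K = ∅}} ∪
     {S | ∃ U : Set G, IsOpen U ∧ S = {H : ChabautySpace G | ((H.1 : Set G) ∩ U).Nonempty}})

theorem discreteTopology_of_forall_exists_isOpen_inter_finite {X : Type*} [TopologicalSpace X]
    [T1Space X] {S : Set X} (h : ∀ x ∈ S, ∃ U, IsOpen U ∧ x ∈ U ∧ (U ∩ S).Finite) :
    DiscreteTopology S := by
  refine discreteTopology_iff_isOpen_singleton.mpr fun x ↦ ?_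
  obtain ⟨U, hU, hxU, hfin⟩ := h x x.2
  refine isOpen_singleton_of_finite_mem_nhds x (s := Subtype.val ⁻¹' U)
    (hU.preimage continuous_subtype_val |>.mem_nhds hxU) ?_
  rw [← Subtype.preimage_coe_inter_self]
  exact hfin.preimage Subtype.val_injective.injOn

namespace ChabautySpace

variable {G : Type*} [AddGroup G] [TopologicalSpace G]

theorem isOpen_setOf_notMem (g : G) : IsOpen {H : ChabautySpace G | g ∉ H.1} := by
  refine TopologicalSpace.isOpen_generateFrom_of_mem (Or.inl ⟨{g}, isCompact_singleton, ?_⟩)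
  simp [Set.inter_singleton_eq_empty]

theorem isOpen_setOf_mem [DiscreteTopology G] (g : G) :
    IsOpen {H : ChabautySpace G | g ∈ H.1} := by
  refine TopologicalSpace.isOpen_generateFrom_of_mem (Or.inr ⟨{g}, isOpen_discrete _, ?_⟩)
  simp [Set.inter_singleton_nonempty]

theorem isClopen_setOf_mem [DiscreteTopology G] (g : G) :
    IsClopen {H : ChabautySpace G | g ∈ H.1} :=
  ⟨isOpen_compl_iff.mp (isOpen_setOf_notMem g), isOpen_setOf_mem g⟩

instance [DiscreteTopology G] : TotallySeparatedSpace (ChabautySpace G) := by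
  refine totallySeparatedSpace_iff_exists_isClopen.mpr fun H H' hne ↦ ?_
  obtain ⟨g, hg⟩ : ∃ g, ¬(g ∈ H.1 ↔ g ∈ H'.1) := by
    by_contra! h
    exact hne (Subtype.ext (AddSubgroup.ext h))
  by_cases hgH : g ∈ H.1
  · exact ⟨_, isClopen_setOf_mem g, hgH, fun hgH' ↦ hg (iff_of_true hgH hgH')⟩
  · exact ⟨_, (isClopen_setOf_mem g).compl, hgH, fun hgH' ↦ hg (iff_of_false hgH hgH')⟩

end ChabautySpace

theorem Int.finite_setOf_dvd {m : ℤ} (hm : m ≠ 0) : {n : ℤ | n ∣ m}.Finite := by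
  refine (Set.finite_Icc (-|m|) |m|).subset fun n hn ↦ ?_
  exact abs_le.mp (Int.le_of_dvd (abs_pos.mpr hm) ((abs_dvd_abs _ _).mpr hn))

def zsmulRoots {G : Type*} [AddGroup G] (g : G) : Set G := {h | ∃ n : ℤ, n ≠ 0 ∧ n • h = g}

theorem Pi.finite_zsmulRoots {ι : Type*} {g : ι → ℤ} (hg : g ≠ 0) : (zsmulRoots g).Finite := by
  obtain ⟨j, hj⟩ := Function.ne_iff.mp hg
  refine ((Int.finite_setOf_dvd hj).biUnion (t := fun n ↦ {h | n ≠ 0 ∧ n • h = g})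
    fun n _ ↦ ?_).subset ?_
  · exact Set.Subsingleton.finite fun h₁ ⟨hn, h₁g⟩ h₂ ⟨_, h₂g⟩ ↦
      zsmul_right_injective hn (h₁g.trans h₂g.symm)
  · rintro h ⟨n, hn, rfl⟩
    exact Set.mem_biUnion (x := n) (dvd_mul_right n (h j)) ⟨hn, rfl⟩

theorem Prod.finite_zsmulRoots {A F : Type*} [AddGroup A] [AddGroup F] [Finite F] {g : A × F}
    (h : (zsmulRoots g.1).Finite) : (zsmulRoots g).Finite :=
  (h.prod Set.finite_univ).subset fun _ ⟨n, hn, hx⟩ ↦ ⟨⟨n, hn, congrArg Prod.fst hx⟩, trivial⟩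

theorem finite_setOf_zmultiples_mem {G : Type*} [AddGroup G] {g : G} (hg : g ≠ 0)
    (hroots : (zsmulRoots g).Finite) :
    {H : AddSubgroup G | (∃ h, H = AddSubgroup.zmultiples h) ∧ g ∈ H}.Finite := by
  refine (hroots.image AddSubgroup.zmultiples).subset ?_
  rintro _ ⟨⟨h, rfl⟩, hgh⟩
  obtain ⟨n, rfl⟩ := AddSubgroup.mem_zmultiples_iff.mp hgh
  exact ⟨h, ⟨n, by rintro rfl; exact hg (zero_zsmul h), rfl⟩, rfl⟩

theorem Prod.fst_ne_zero_of_infinite_zmultiples {A F : Type*} [AddGroup A] [AddGroup F] [Finite F]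
    {g : A × F} (h : (AddSubgroup.zmultiples g : Set (A × F)).Infinite) : g.1 ≠ 0 := by
  intro hg
  have hfst : IsOfFinAddOrder g.1 := hg ▸ IsOfFinAddOrder.zero
  exact h (finite_zmultiples.mpr
    (IsOfFinAddOrder.prod_iff.mpr ⟨hfst, isOfFinAddOrder_of_finite g.2⟩))

/-- For `G = ℤ^d ⊕ F` with `F` finite abelian (a countable discrete group), the topology
induced by the Chabauty space `C(G)` on the set `IC(G)` of infinite cyclic subgroups is
discrete. -/
theorem chabauty_infinite_cyclic_discrete
    (d : ℕ) (F : Type*) [AddCommGroup F] [Finite F] [TopologicalSpace F]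
    [DiscreteTopology F] :
    DiscreteTopology {H : ChabautySpace ((Fin d → ℤ) × F) |
        (∃ g, H.1 = AddSubgroup.zmultiples g) ∧ (H.1 : Set ((Fin d → ℤ) × F)).Infinite} := by
  refine discreteTopology_of_forall_exists_isOpen_inter_finite fun H ⟨⟨g, hg⟩, hinf⟩ ↦ ?_
  have hg₁ : g.1 ≠ 0 := Prod.fst_ne_zero_of_infinite_zmultiples (hg ▸ hinf)
  have hfin := finite_setOf_zmultiples_mem (fun h ↦ hg₁ (congrArg Prod.fst h))
    (Prod.finite_zsmulRoots (Pi.finite_zsmulRoots hg₁))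
  refine ⟨_, ChabautySpace.isOpen_setOf_mem g, ?_, ?_⟩
  · change g ∈ H.1.1
    exact hg ▸ AddSubgroup.mem_zmultiples g
  · refine (hfin.preimage (f := fun H' : ChabautySpace _ ↦ H'.1)
      Subtype.val_injective.injOn).subset ?_
    rintro H' ⟨hgH', ⟨h, hh⟩, -⟩
    exact ⟨⟨h, hh⟩, hgH'⟩
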